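/- arXiv:2204.12155 — 4 statements merged into one kernel-verified Lean document; each statement's English description precedes it below -/
import Mathlib

section
/- Let ℓ: ℝ → ℝ be strictly convex and differentiable. Then B_ℓ(u,v) = B_ℓ(−u,−v) for all u, v ∈ ℝ if and only if there exists a constant c such that ℓ'(v) + ℓ'(−v) = c for all v ∈ ℝ. -/
/-! With `o x = ℓ x - ℓ (-x)`, expanding gives
`B(u, v) - B(-u, -v) = o u - o v - (ℓ' v + ℓ' (-v)) (u - v)`.
If the left side always vanishes, the choices `(v, 0)` and `(0, v)` give
`o v = 2 ℓ'(0) v = (ℓ' v + ℓ' (-v)) v`, so `ℓ' v + ℓ' (-v) = 2 ℓ'(0)`.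
Conversely, `o' x = ℓ' x + ℓ' (-x)`, so gradient symmetry makes `o` linear, `o x = c x`,
and the right side vanishes. -/

noncomputable def bregman (ℓ : ℝ → ℝ) (u v : ℝ) : ℝ :=
  ℓ u - ℓ v - deriv ℓ v * (u - v)

lemma bregman_sub_bregman_neg (ℓ : ℝ → ℝ) (u v : ℝ) :
    bregman ℓ u v - bregman ℓ (-u) (-v) =
      (ℓ u - ℓ (-u)) - (ℓ v - ℓ (-v)) - (deriv ℓ v + deriv ℓ (-v)) * (u - v) := by
  unfold bregman
  ring

lemma deriv_add_deriv_neg_eq_of_bregman_neg {ℓ : ℝ → ℝ}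
    (h : ∀ u v, bregman ℓ u v = bregman ℓ (-u) (-v)) (v : ℝ) :
    deriv ℓ v + deriv ℓ (-v) = 2 * deriv ℓ 0 := by
  have h₁ := bregman_sub_bregman_neg ℓ v 0
  have h₂ := bregman_sub_bregman_neg ℓ 0 v
  rw [h, sub_self] at h₁ h₂
  rcases eq_or_ne v 0 with rfl | hv
  · rw [neg_zero]
    ring
  · refine mul_right_cancel₀ hv ?_
    simp only [neg_zero] at h₁ h₂
    linear_combination -(h₁ + h₂)

lemma sub_comp_neg_eq_mul_of_deriv_add_deriv_neg {ℓ : ℝ → ℝ} (hd : Differentiable ℝ ℓ)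
    {c : ℝ} (hc : ∀ v, deriv ℓ v + deriv ℓ (-v) = c) (x : ℝ) :
    ℓ x - ℓ (-x) = c * x := by
  have hderiv : ∀ y, HasDerivAt (fun y ↦ ℓ y - ℓ (-y) - c * y) 0 y := fun y ↦ by
    have := ((hd y).hasDerivAt.sub ((hd (-y)).hasDerivAt.comp y (hasDerivAt_neg y))).sub
      ((hasDerivAt_id y).const_mul c)
    exact this.congr_deriv (by linear_combination hc y)
  have := is_const_of_deriv_eq_zero (fun y ↦ (hderiv y).differentiableAt)
    (fun y ↦ (hderiv y).deriv) x 0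
  simp only [neg_zero, sub_self, mul_zero] at this
  linear_combination this

lemma bregman_neg_of_deriv_add_deriv_neg {ℓ : ℝ → ℝ} (hd : Differentiable ℝ ℓ) {c : ℝ}
    (hc : ∀ v, deriv ℓ v + deriv ℓ (-v) = c) (u v : ℝ) :
    bregman ℓ u v = bregman ℓ (-u) (-v) := by
  have hodd := sub_comp_neg_eq_mul_of_deriv_add_deriv_neg hd hc
  have := bregman_sub_bregman_neg ℓ u v
  rw [hodd, hodd, hc] at this
  linear_combination this

theorem stmt1_general (ℓ : ℝ → ℝ) (hd : Differentiable ℝ ℓ) :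
    (∀ u v : ℝ,
        ℓ u - ℓ v - deriv ℓ v * (u - v) =
          ℓ (-u) - ℓ (-v) - deriv ℓ (-v) * (-u - -v))
      ↔ ∃ c : ℝ, ∀ v : ℝ, deriv ℓ v + deriv ℓ (-v) = c :=
  ⟨fun h ↦ ⟨2 * deriv ℓ 0, deriv_add_deriv_neg_eq_of_bregman_neg h⟩,
    fun ⟨_, hc⟩ ↦ bregman_neg_of_deriv_add_deriv_neg hd hc⟩

/-- Bregman symmetry under negation iff gradient-symmetric. -/
theorem stmt1 (ℓ : ℝ → ℝ) (hd : Differentiable ℝ ℓ) (hconv : StrictConvexOn ℝ Set.univ ℓ) :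
    (∀ u v : ℝ,
        ℓ u - ℓ v - deriv ℓ v * (u - v) =
          ℓ (-u) - ℓ (-v) - deriv ℓ (-v) * (-u - -v))
      ↔ ∃ c : ℝ, ∀ v : ℝ, deriv ℓ v + deriv ℓ (-v) = c :=
  stmt1_general ℓ hd
end

section
/- Let ℓ: ℝ → ℝ be a differentiable strictly convex gradient-symmetric function. For any y ∈ {−1,+1} and any functions f_1,…,f_M: each real, with f̄ = (1/M)∑ f_i, we have ℓ(y·f̄) = (1/M)∑_i ℓ(y·f_i) − (1/M)∑_i B_ℓ(f_i, f̄). -/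
/-!
Gradient symmetry integrates to `ℓ (-v) = ℓ v - c v`, so for `y = ±1` the map `v ↦ ℓ (y v)`
differs from `ℓ` by a linear function. Linear functions commute with averaging, hence the Jensen
gap `mean ℓ(y fᵢ) - ℓ(y f̄)` equals `mean ℓ(fᵢ) - ℓ(f̄)`. The latter is the mean Bregman divergence
`mean B_ℓ(fᵢ, f̄)`, because the linear term `ℓ'(f̄)(fᵢ - f̄)` averages to zero.
-/

open Finset

theorem apply_neg_eq_sub_mul_of_deriv_add_deriv_neg {ℓ : ℝ → ℝ} (hd : Differentiable ℝ ℓ)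
    {c : ℝ} (hgs : ∀ v, deriv ℓ v + deriv ℓ (-v) = c) (v : ℝ) : ℓ (-v) = ℓ v - c * v := by
  set g : ℝ → ℝ := fun v => ℓ v - ℓ (-v) - c * v
  have hg : ∀ v, HasDerivAt g 0 v := fun v => by
    have hneg : HasDerivAt (fun x => ℓ (-x)) (deriv ℓ (-v) * -1) v :=
      (hd (-v)).hasDerivAt.comp v (hasDerivAt_neg v)
    have h := ((hd v).hasDerivAt.sub hneg).sub ((hasDerivAt_id' v).const_mul c)
    rwa [show deriv ℓ v - deriv ℓ (-v) * -1 - c * 1 = 0 by linarith [hgs v]] at h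
  have hconst : g v = g 0 :=
    is_const_of_deriv_eq_zero (fun x => (hg x).differentiableAt) (fun x => (hg x).deriv) v 0
  simp only [g, neg_zero, sub_self, mul_zero] at hconst
  linarith

theorem Finset.sum_sub_sub_mul_sub_of_sum_eq_card_mul {ι R : Type*} [CommRing R]
    (s : Finset ι) (f : ι → R) (g : R → R) (d : R) {m : R} (hm : ∑ i ∈ s, f i = #s * m) :
    ∑ i ∈ s, (g (f i) - g m - d * (f i - m)) = ∑ i ∈ s, g (f i) - #s * g m := by
  simp only [sum_sub_distrib, ← mul_sum, sum_const, hm, nsmul_eq_mul]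
  ring

theorem stmt7_general (ℓ : ℝ → ℝ) (hd : Differentiable ℝ ℓ)
    (c : ℝ) (hgs : ∀ v : ℝ, deriv ℓ v + deriv ℓ (-v) = c)
    (y : ℝ) (hy : y = -1 ∨ y = 1) (M : ℕ) (hM : 1 ≤ M) (f : Fin M → ℝ) :
    ℓ (y * ((∑ i, f i) / M)) =
      (∑ i, ℓ (y * f i)) / M -
        (∑ i, (ℓ (f i) - ℓ ((∑ j, f j) / M)
          - deriv ℓ ((∑ j, f j) / M) * (f i - (∑ j, f j) / M))) / M := by
  have hM0 : (M : ℝ) ≠ 0 := by positivity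
  set m := (∑ j, f j) / M
  have hm : ∑ i, f i = #(univ : Finset (Fin M)) * m := by
    rw [card_univ, Fintype.card_fin]
    exact (mul_div_cancel₀ _ hM0).symm
  obtain ⟨a, ha⟩ : ∃ a, ∀ v, ℓ (y * v) = ℓ v + a * v := by
    rcases hy with rfl | rfl
    · exact ⟨-c, fun v => by
        rw [neg_one_mul, apply_neg_eq_sub_mul_of_deriv_add_deriv_neg hd hgs]; ring⟩
    · exact ⟨0, fun v => by simp⟩
  rw [sum_sub_sub_mul_sub_of_sum_eq_card_mul _ _ _ _ hm]
  simp only [ha, sum_add_distrib, ← mul_sum, hm, card_univ, Fintype.card_fin]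
  field_simp
  ring

/-- Ambiguity decomposition for gradient-symmetric losses. -/
theorem stmt7 (ℓ : ℝ → ℝ) (hd : Differentiable ℝ ℓ) (hconv : StrictConvexOn ℝ Set.univ ℓ)
    (c : ℝ) (hgs : ∀ v : ℝ, deriv ℓ v + deriv ℓ (-v) = c)
    (y : ℝ) (hy : y = -1 ∨ y = 1) (M : ℕ) (hM : 1 ≤ M) (f : Fin M → ℝ) :
    ℓ (y * ((∑ i, f i) / M)) =
      (∑ i, ℓ (y * f i)) / M -
        (∑ i, (ℓ (f i) - ℓ ((∑ j, f j) / M)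
          - deriv ℓ ((∑ j, f j) / M) * (f i - (∑ j, f j) / M))) / M :=
  stmt7_general ℓ hd c hgs y hy M hM f
end

section
/- Let ℓ: ℝ → ℝ be a strictly convex differentiable gradient-symmetric function with constant c, satisfying inf ℓ = 0 and lim_{v→∞} ℓ(v) = 0. Then for all f ∈ ℝ: lim_{g→∞} B_ℓ(f, g) = ℓ(f) and lim_{g→−∞} B_ℓ(f, g) = ℓ(−f). -/
/-!
Since `ℓ` is convex and tends to `0` at `+∞`, its derivative is nonpositive, and comparing the
tangent at `g` with the value at the midpoint `(g + f) / 2` squeezes `ℓ'(g) (f - g)` to `0`; hence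
`B_ℓ(f, g) → ℓ(f)` as `g → ∞`. Gradient symmetry integrates to `ℓ(v) = ℓ(-v) + c v`, which gives
`B_ℓ(f, -g) = B_ℓ(-f, g)`, so the limit at `-∞` is the limit at `+∞` for `-f`.
-/

open Filter Set Topology

noncomputable def bregmanDiv (ℓ : ℝ → ℝ) (u v : ℝ) : ℝ :=
  ℓ u - ℓ v - deriv ℓ v * (u - v)

namespace ConvexOn

variable {f : ℝ → ℝ} {L : ℝ}

lemma add_deriv_mul_sub_le (hf : ConvexOn ℝ univ f) {x : ℝ} (hd : DifferentiableAt ℝ f x)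
    (y : ℝ) : f x + deriv f x * (y - x) ≤ f y := by
  rcases lt_trichotomy x y with hxy | rfl | hyx
  · have := hf.deriv_le_slope (mem_univ x) (mem_univ y) hxy hd
    rw [slope_def_field, le_div_iff₀ (sub_pos.mpr hxy)] at this
    linarith
  · simp
  · have := hf.slope_le_deriv (mem_univ y) (mem_univ x) hyx hd
    rw [slope_def_field, div_le_iff₀ (sub_pos.mpr hyx)] at this
    linarith

lemma deriv_nonpos_of_tendsto_atTop (hf : ConvexOn ℝ univ f) {x : ℝ}
    (hd : DifferentiableAt ℝ f x) (hlim : Tendsto f atTop (𝓝 L)) : deriv f x ≤ 0 := by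
  by_contra! hpos
  have htangent : Tendsto (fun y => f x + deriv f x * (y - x)) atTop atTop :=
    tendsto_atTop_add_const_left _ _
      ((tendsto_atTop_add_const_right _ _ tendsto_id).const_mul_atTop hpos)
  exact not_tendsto_nhds_of_tendsto_atTop
    (tendsto_atTop_mono (hf.add_deriv_mul_sub_le hd) htangent) L hlim

lemma tendsto_deriv_mul_sub_atTop (hf : ConvexOn ℝ univ f) (hd : Differentiable ℝ f)
    (hlim : Tendsto f atTop (𝓝 L)) (a : ℝ) :
    Tendsto (fun g => deriv f g * (a - g)) atTop (𝓝 0) := by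
  have hmid : Tendsto (fun g => f ((g + a) / 2)) atTop (𝓝 L) :=
    hlim.comp ((tendsto_atTop_add_const_right _ _ tendsto_id).atTop_div_const two_pos)
  have hupper : Tendsto (fun g => 2 * (f ((g + a) / 2) - f g)) atTop (𝓝 0) := by
    simpa using (hmid.sub hlim).const_mul 2
  refine tendsto_of_tendsto_of_tendsto_of_le_of_le' tendsto_const_nhds hupper ?_ ?_
  · filter_upwards [eventually_ge_atTop a] with g hg
    exact mul_nonneg_of_nonpos_of_nonpos (hf.deriv_nonpos_of_tendsto_atTop (hd g) hlim)
      (sub_nonpos.mpr hg)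
  · filter_upwards with g
    have := hf.add_deriv_mul_sub_le (hd g) ((g + a) / 2)
    linarith

lemma tendsto_bregmanDiv_atTop (hf : ConvexOn ℝ univ f) (hd : Differentiable ℝ f)
    (hlim : Tendsto f atTop (𝓝 L)) (u : ℝ) :
    Tendsto (bregmanDiv f u) atTop (𝓝 (f u - L)) := by
  have h : Tendsto (bregmanDiv f u) atTop (𝓝 (f u - L - 0)) :=
    (tendsto_const_nhds.sub hlim).sub (hf.tendsto_deriv_mul_sub_atTop hd hlim u)
  rwa [sub_zero] at h

end ConvexOn

section GradientSymmetric

variable {f : ℝ → ℝ} {c : ℝ}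

lemma eq_comp_neg_add_mul_of_deriv_add_deriv_neg (hd : Differentiable ℝ f)
    (hgs : ∀ v, deriv f v + deriv f (-v) = c) (v : ℝ) : f v = f (-v) + c * v := by
  have hdiff : Differentiable ℝ fun v => f v - f (-v) - c * v :=
    (hd.sub (hd.comp differentiable_neg)).sub (differentiable_id.const_mul c)
  have hderiv (x : ℝ) : deriv (fun v => f v - f (-v) - c * v) x = 0 := by
    have hneg : HasDerivAt (fun v => f (-v)) (deriv f (-x) * -1) x :=
      (hd (-x)).hasDerivAt.comp x (hasDerivAt_neg x)
    have h : HasDerivAt (fun v => f v - f (-v) - c * v)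
        (deriv f x - deriv f (-x) * -1 - c * 1) x :=
      ((hd x).hasDerivAt.sub hneg).sub ((hasDerivAt_id x).const_mul c)
    rw [h.deriv]
    linarith [hgs x]
  have hconst := is_const_of_deriv_eq_zero hdiff hderiv v 0
  simp only [neg_zero, sub_self, mul_zero] at hconst
  linarith

lemma bregmanDiv_neg_right (hd : Differentiable ℝ f) (hgs : ∀ v, deriv f v + deriv f (-v) = c)
    (u v : ℝ) : bregmanDiv f u (-v) = bregmanDiv f (-u) v := by
  have hu := eq_comp_neg_add_mul_of_deriv_add_deriv_neg hd hgs u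
  have hv := eq_comp_neg_add_mul_of_deriv_add_deriv_neg hd hgs v
  have hv' := hgs v
  unfold bregmanDiv
  rw [hu, show deriv f (-v) = c - deriv f v by linarith, show f (-v) = f v - c * v by linarith]
  ring

end GradientSymmetric

theorem stmt13_general (ℓ : ℝ → ℝ) (hd : Differentiable ℝ ℓ) (hconv : StrictConvexOn ℝ Set.univ ℓ)
    (c : ℝ) (hgs : ∀ v : ℝ, deriv ℓ v + deriv ℓ (-v) = c)
    (hlim : Filter.Tendsto ℓ Filter.atTop (nhds 0)) (f : ℝ) :
    Filter.Tendsto (fun g => ℓ f - ℓ g - deriv ℓ g * (f - g)) Filter.atTop (nhds (ℓ f)) ∧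
    Filter.Tendsto (fun g => ℓ f - ℓ g - deriv ℓ g * (f - g)) Filter.atBot (nhds (ℓ (-f))) := by
  have hlimit (u : ℝ) : Tendsto (bregmanDiv ℓ u) atTop (𝓝 (ℓ u)) := by
    simpa using hconv.convexOn.tendsto_bregmanDiv_atTop hd hlim u
  refine ⟨hlimit f, tendsto_comp_neg_atTop_iff.mp ?_⟩
  show Tendsto (fun g => bregmanDiv ℓ f (-g)) atTop _
  simpa only [bregmanDiv_neg_right hd hgs] using hlimit (-f)

/-- Gradient-symmetric losses as limits of Bregman divergences. -/
theorem stmt13 (ℓ : ℝ → ℝ) (hd : Differentiable ℝ ℓ) (hconv : StrictConvexOn ℝ Set.univ ℓ)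
    (c : ℝ) (hgs : ∀ v : ℝ, deriv ℓ v + deriv ℓ (-v) = c)
    (hinf : IsGLB (Set.range ℓ) 0)
    (hlim : Filter.Tendsto ℓ Filter.atTop (nhds 0)) (f : ℝ) :
    Filter.Tendsto (fun g => ℓ f - ℓ g - deriv ℓ g * (f - g)) Filter.atTop (nhds (ℓ f)) ∧
    Filter.Tendsto (fun g => ℓ f - ℓ g - deriv ℓ g * (f - g)) Filter.atBot (nhds (ℓ (-f))) :=
  stmt13_general ℓ hd hconv c hgs hlim f
end

section
/- Let κ, λ: S → ℝ be strictly monotonic continuous functions on a closed interval S ⊆ ℝ. If for M = 2 and all v₁, v₂ ∈ S, κ⁻¹((κ(v₁)+κ(v₂))/2) = λ⁻¹((λ(v₁)+λ(v₂))/2), then κ = a·λ + b for some constants a ≠ 0 and b. -/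
lemma key18 (S : Set ℝ) (hS : IsClosed S) (hconn : S.OrdConnected)
    (κ lam : ℝ → ℝ) (hκ : StrictMonoOn κ S) (hl : StrictMonoOn lam S)
    (hκc : ContinuousOn κ S) (hlc : ContinuousOn lam S)
    (hmeans : ∀ v₁ ∈ S, ∀ v₂ ∈ S, ∀ m ∈ S,
      (κ m = (κ v₁ + κ v₂) / 2 ↔ lam m = (lam v₁ + lam v₂) / 2)) :
    ∃ a b : ℝ, a ≠ 0 ∧ ∀ v ∈ S, κ v = a * lam v + b := by
  by_cases hnt : S.Nontrivial
  · obtain ⟨u, hu, w, hw, huw⟩ := hnt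
    -- WLOG u < w
    obtain ⟨u, hu, w, hw, huw⟩ : ∃ u ∈ S, ∃ w ∈ S, u < w := by
      rcases lt_or_gt_of_ne huw with h | h
      · exact ⟨u, hu, w, hw, h⟩
      · exact ⟨w, hw, u, hu, h⟩
    -- midpoint existence
    have mid : ∀ v₁ ∈ S, ∀ v₂ ∈ S, v₁ ≤ v₂ →
        ∃ m ∈ S, m ∈ Set.Icc v₁ v₂ ∧ κ m = (κ v₁ + κ v₂) / 2 ∧
          lam m = (lam v₁ + lam v₂) / 2 := by
      intro v₁ h1 v₂ h2 h12
      have hsub : Set.Icc v₁ v₂ ⊆ S := hconn.out h1 h2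
      have hκle : κ v₁ ≤ κ v₂ := by
        rcases eq_or_lt_of_le h12 with h | h
        · rw [h]
        · exact (hκ h1 h2 h).le
      have hmem : (κ v₁ + κ v₂) / 2 ∈ Set.Icc (κ v₁) (κ v₂) := ⟨by linarith, by linarith⟩
      obtain ⟨m, hmI, hm⟩ := intermediate_value_Icc h12 (hκc.mono hsub) hmem
      have hmS : m ∈ S := hsub hmI
      exact ⟨m, hmS, hmI, hm, (hmeans v₁ h1 v₂ h2 m hmS).1 hm⟩
    -- affine relation on each subinterval
    have main : ∀ α ∈ S, ∀ β ∈ S, α < β → ∀ v ∈ S, v ∈ Set.Icc α β →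
        κ v = ((κ β - κ α) / (lam β - lam α)) * lam v
          + (κ α - ((κ β - κ α) / (lam β - lam α)) * lam α) := by
      intro α hα β hβ hαβ v hv hvI
      set a : ℝ := (κ β - κ α) / (lam β - lam α) with ha
      set b : ℝ := κ α - a * lam α with hb
      have hlab : lam α < lam β := hl hα hβ hαβ
      have hκab : κ α < κ β := hκ hα hβ hαβ
      have hlne : lam β - lam α ≠ 0 := sub_ne_zero.2 hlab.ne'
      have haβ : a * (lam β - lam α) = κ β - κ α := div_mul_cancel₀ _ hlne
      set T : Set ℝ := (S ∩ Set.Icc α β) ∩ (fun x => κ x - (a * lam x + b)) ⁻¹' {0}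
        with hT
      have hTmem : ∀ x, x ∈ T ↔ x ∈ S ∧ x ∈ Set.Icc α β ∧ κ x = a * lam x + b := by
        intro x
        simp only [hT, Set.mem_inter_iff, Set.mem_preimage, Set.mem_singleton_iff,
          sub_eq_zero, and_assoc]
      have hTclosed : IsClosed T := by
        apply ContinuousOn.preimage_isClosed_of_isClosed
        · exact (hκc.sub ((continuousOn_const.mul hlc).add continuousOn_const)).mono
            Set.inter_subset_left
        · exact hS.inter isClosed_Icc
        · exact isClosed_singleton
      have hαT : α ∈ T := (hTmem α).2 ⟨hα, ⟨le_refl _, hαβ.le⟩, by rw [hb]; ring⟩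
      have hβT : β ∈ T := by
        refine (hTmem β).2 ⟨hβ, ⟨hαβ.le, le_refl _⟩, ?_⟩
        have h2 : a * (lam β - lam α) = a * lam β - a * lam α := by ring
        rw [hb]; linarith
      -- sup/inf argument
      set p : ℝ := sSup (T ∩ Set.Iic v) with hp
      set q : ℝ := sInf (T ∩ Set.Ici v) with hq
      have hbu : BddAbove (T ∩ Set.Iic v) := ⟨v, fun x hx => hx.2⟩
      have hbl : BddBelow (T ∩ Set.Ici v) := ⟨v, fun x hx => hx.2⟩
      have hne1 : (T ∩ Set.Iic v).Nonempty := ⟨α, hαT, hvI.1⟩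
      have hne2 : (T ∩ Set.Ici v).Nonempty := ⟨β, hβT, hvI.2⟩
      have hpT : p ∈ T ∩ Set.Iic v :=
        (hTclosed.inter isClosed_Iic).csSup_mem hne1 hbu
      have hqT : q ∈ T ∩ Set.Ici v :=
        (hTclosed.inter isClosed_Ici).csInf_mem hne2 hbl
      obtain ⟨hpS, hpI, hpe⟩ := (hTmem p).1 hpT.1
      obtain ⟨hqS, hqI, hqe⟩ := (hTmem q).1 hqT.1
      have hpv : p ≤ v := hpT.2
      have hvq : v ≤ q := hqT.2
      have hqp : q ≤ p := by
        by_contra hcon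
        push_neg at hcon
        obtain ⟨m, hmS, hmI, hmκ, hml⟩ := mid p hpS q hqS hcon.le
        have hκpq : κ p < κ q := hκ hpS hqS hcon
        have hpm : p < m := by
          have : κ p < κ m := by rw [hmκ]; linarith
          exact (hκ.lt_iff_lt hpS hmS).1 this
        have hmq : m < q := by
          have : κ m < κ q := by rw [hmκ]; linarith
          exact (hκ.lt_iff_lt hmS hqS).1 this
        have hme : κ m = a * lam m + b := by
          have h5 : a * lam m = a * ((lam p + lam q) / 2) := by rw [hml]
          have h6 : a * ((lam p + lam q) / 2) = (a * lam p + a * lam q) / 2 := by ring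
          rw [hmκ]; linarith
        have hmT : m ∈ T := (hTmem m).2 ⟨hmS, ⟨hpI.1.trans hpm.le, hmq.le.trans hqI.2⟩, hme⟩
        rcases le_total m v with h | h
        · exact absurd (le_csSup hbu ⟨hmT, h⟩) (not_le.2 hpm)
        · exact absurd (csInf_le hbl ⟨hmT, h⟩) (not_le.2 hmq)
      have hpveq : p = v := le_antisymm hpv (hvq.trans hqp)
      rw [← hpveq]; exact hpe
    -- assemble
    set a : ℝ := (κ w - κ u) / (lam w - lam u) with ha
    set b : ℝ := κ u - a * lam u with hb
    have hluw : lam u < lam w := hl hu hw huw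
    have hκuw : κ u < κ w := hκ hu hw huw
    have hlne : lam w - lam u ≠ 0 := sub_ne_zero.2 hluw.ne'
    have hane : a ≠ 0 := div_ne_zero (sub_ne_zero.2 hκuw.ne') hlne
    refine ⟨a, b, hane, fun v hv => ?_⟩
    set α : ℝ := min u v with hα
    set β : ℝ := max w v with hβ
    have hαS : α ∈ S := by rcases min_cases u v with ⟨h, _⟩ | ⟨h, _⟩ <;> rw [hα, h] <;> assumption
    have hβS : β ∈ S := by rcases max_cases w v with ⟨h, _⟩ | ⟨h, _⟩ <;> rw [hβ, h] <;> assumption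
    have hαβ : α < β := lt_of_le_of_lt (min_le_left _ _) (huw.trans_le (le_max_left _ _))
    set A : ℝ := (κ β - κ α) / (lam β - lam α) with hA
    set B : ℝ := κ α - A * lam α with hB
    have hEu : κ u = A * lam u + B :=
      main α hαS β hβS hαβ u hu ⟨min_le_left _ _, huw.le.trans (le_max_left _ _)⟩
    have hEw : κ w = A * lam w + B :=
      main α hαS β hβS hαβ w hw ⟨(min_le_left _ _).trans huw.le, le_max_left _ _⟩
    have hEv : κ v = A * lam v + B :=
      main α hαS β hβS hαβ v hv ⟨min_le_right _ _, le_max_right _ _⟩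
    have haw : a * (lam w - lam u) = κ w - κ u := div_mul_cancel₀ _ hlne
    have hAa : A = a := by
      have h1 : (A - a) * (lam w - lam u) = 0 := by nlinarith [hEu, hEw, haw]
      rcases mul_eq_zero.1 h1 with h | h
      · linarith [sub_eq_zero.1 h]
      · exact absurd h hlne
    have hBb : B = b := by
      rw [hb]
      have := hEu
      rw [hAa] at this
      linarith
    rw [hEv, hAa, hBb]
  · rw [Set.not_nontrivial_iff] at hnt
    rcases S.eq_empty_or_nonempty with h | ⟨v₀, hv₀⟩
    · exact ⟨1, 0, one_ne_zero, by simp [h]⟩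
    · refine ⟨1, κ v₀ - lam v₀, one_ne_zero, fun v hv => ?_⟩
      rw [hnt hv hv₀]; ring
/-- Quasi-arithmetic means agreeing pairwise forces an affine relation. -/
theorem stmt18 (S : Set ℝ) (hS : IsClosed S) (hconn : S.OrdConnected)
    (κ lam : ℝ → ℝ)
    (hκmono : StrictMonoOn κ S ∨ StrictAntiOn κ S)
    (hlmono : StrictMonoOn lam S ∨ StrictAntiOn lam S)
    (hκcont : ContinuousOn κ S) (hlcont : ContinuousOn lam S)
    (hmeans : ∀ v₁ ∈ S, ∀ v₂ ∈ S, ∀ m ∈ S,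
      (κ m = (κ v₁ + κ v₂) / 2 ↔ lam m = (lam v₁ + lam v₂) / 2)) :
    ∃ a b : ℝ, a ≠ 0 ∧ ∀ v ∈ S, κ v = a * lam v + b := by
  rcases hκmono with hκm | hκm <;> rcases hlmono with hlm | hlm
  · exact key18 S hS hconn κ lam hκm hlm hκcont hlcont hmeans
  · obtain ⟨a, b, ha, hab⟩ := key18 S hS hconn κ (fun x => -lam x) hκm hlm.neg hκcont
      hlcont.neg (by
        intro v₁ h1 v₂ h2 m hm
        constructor
        · intro h
          have := (hmeans v₁ h1 v₂ h2 m hm).1 h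
          linarith
        · intro h
          exact (hmeans v₁ h1 v₂ h2 m hm).2 (by linarith))
    exact ⟨-a, b, neg_ne_zero.2 ha, fun v hv => by have := hab v hv; linarith⟩
  · obtain ⟨a, b, ha, hab⟩ := key18 S hS hconn (fun x => -κ x) lam hκm.neg hlm hκcont.neg
      hlcont (by
        intro v₁ h1 v₂ h2 m hm
        constructor
        · intro h
          exact (hmeans v₁ h1 v₂ h2 m hm).1 (by linarith)
        · intro h
          have := (hmeans v₁ h1 v₂ h2 m hm).2 h
          linarith)
    exact ⟨-a, -b, neg_ne_zero.2 ha, fun v hv => by have := hab v hv; linarith⟩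
  · obtain ⟨a, b, ha, hab⟩ := key18 S hS hconn (fun x => -κ x) (fun x => -lam x) hκm.neg
      hlm.neg hκcont.neg hlcont.neg (by
        intro v₁ h1 v₂ h2 m hm
        have := hmeans v₁ h1 v₂ h2 m hm
        constructor
        · intro h
          have := this.1 (by linarith); linarith
        · intro h
          have := this.2 (by linarith); linarith)
    exact ⟨a, -b, ha, fun v hv => by have := hab v hv; linarith⟩
end
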